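/- Let X be a topological space, G a sheaf of sets on X, and V ⊆ X an open subset. Let (Cₙ)_{n∈ℕ} be closed subsets of X and (Uₙ)_{n∈ℕ} open subsets of X with Cₙ ⊆ Uₙ ⊆ Cₙ₊₁ for all n and ⋃ₙ Uₙ = V. For each n let G(Cₙ) denote the direct limit over open sets W ⊇ Cₙ of G(W) with restriction maps, and let G(Cₙ₊₁) → G(Cₙ) be the map induced by restriction. Then the canonical map G(V) → lim_n G(Cₙ) into the inverse limit of sets, sending a section over V to the sequence of its germ-classes along the Cₙ, is a bijection. -/

import Mathlib

open CategoryTheory TopologicalSpace Opposite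

universe u v

/-- Indexing set for germinal sections along a subset `C`: open sets containing `C`. -/
def NbhdIdx {X : Type u} [TopologicalSpace X] (C : Set X) : Type u :=
  {U : Opens X // C ⊆ ↑U}

/-- The relation identifying two sections, defined on open neighborhoods of `C`, when they agree
after restriction to a common smaller open neighborhood of `C`. -/
def GermRel {X : Type u} [TopologicalSpace X] (F : (Opens X)ᵒᵖ ⥤ Type v) (C : Set X) :
    (Σ U : NbhdIdx C, F.obj (op U.1)) → (Σ U : NbhdIdx C, F.obj (op U.1)) → Prop :=
  fun a b =>
    ∃ (W : NbhdIdx C) (h₁ : W.1 ≤ a.1.1) (h₂ : W.1 ≤ b.1.1),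
      F.map (homOfLE h₁).op a.2 = F.map (homOfLE h₂).op b.2

/-- `F(C)`: the direct limit, over open sets `U ⊇ C`, of the sections `F(U)` under restriction. -/
def Germs {X : Type u} [TopologicalSpace X] (F : (Opens X)ᵒᵖ ⥤ Type v) (C : Set X) :
    Type (max u v) :=
  Quot (GermRel F C)

/-- The canonical map `F(C') → F(C)` on germinal sections, for `C ⊆ C'`. -/
def germRestrict {X : Type u} [TopologicalSpace X] (F : (Opens X)ᵒᵖ ⥤ Type v)
    {C C' : Set X} (h : C ⊆ C') : Germs F C' → Germs F C :=
  Quot.lift (fun a => Quot.mk (GermRel F C) ⟨⟨a.1.1, h.trans a.1.2⟩, a.2⟩)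
    (by
      rintro ⟨U, s⟩ ⟨V, t⟩ ⟨W, h₁, h₂, hst⟩
      exact Quot.sound ⟨⟨W.1, h.trans W.2⟩, h₁, h₂, hst⟩)

/-!
Since `Uₙ ⊆ Cₙ₊₁` and `Uₙ` is open, a germ along `Cₙ₊₁` has an honest restriction to `Uₙ`, and
the germ of a section along `Cₙ` is determined by its restriction to the open set `Uₙ ⊇ Cₙ`.
A compatible sequence of germs therefore amounts to a compatible family of sections on the
increasing open cover `(Uₙ)` of `V`, which glues uniquely.
-/

section

variable {X : Type u} [TopologicalSpace X]

lemma map_homOfLE_map_homOfLE (F : (Opens X)ᵒᵖ ⥤ Type v) {U V W : Opens X} (h₁ : U ≤ V)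
    (h₂ : V ≤ W) (s : F.obj (op W)) :
    F.map (homOfLE h₁).op (F.map (homOfLE h₂).op s) = F.map (homOfLE (h₁.trans h₂)).op s :=
  (Functor.map_comp_apply F _ _ s).symm

lemma map_homOfLE_of_monotone {F : (Opens X)ᵒᵖ ⥤ Type v} {U : ℕ → Opens X} (hU : Monotone U)
    {s : ∀ n, F.obj (op (U n))}
    (hs : ∀ n, F.map (homOfLE (hU n.le_succ)).op (s (n + 1)) = s n) {i j : ℕ} (hij : i ≤ j) :
    F.map (homOfLE (hU hij)).op (s j) = s i := by
  induction j, hij using Nat.le_induction with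
  | base => exact F.map_id_apply _ (s i)
  | succ j hij ih =>
    rw [← map_homOfLE_map_homOfLE F (hU hij) (hU j.le_succ), hs j, ih]

def HasUniqueGluing (F : (Opens X)ᵒᵖ ⥤ Type v) : Prop :=
  ∀ {ι : Type u} (W : ι → Opens X) (sec : ∀ i, F.obj (op (W i))),
    (∀ i j, F.map (homOfLE (inf_le_left : W i ⊓ W j ≤ W i)).op (sec i)
          = F.map (homOfLE (inf_le_right : W i ⊓ W j ≤ W j)).op (sec j)) →
    ∃! t : F.obj (op (iSup W)), ∀ i, F.map (homOfLE (le_iSup W i)).op t = sec i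

namespace HasUniqueGluing

variable {F : (Opens X)ᵒᵖ ⥤ Type v} (hF : HasUniqueGluing F)
include hF

lemma existsUnique_of_iSup_eq {ι : Type u} (W : ι → Opens X) {O : Opens X}
    (hsup : iSup W = O) (hle : ∀ i, W i ≤ O) (sec : ∀ i, F.obj (op (W i)))
    (compat : ∀ i j, F.map (homOfLE (inf_le_left : W i ⊓ W j ≤ W i)).op (sec i)
      = F.map (homOfLE (inf_le_right : W i ⊓ W j ≤ W j)).op (sec j)) :
    ∃! t : F.obj (op O), ∀ i, F.map (homOfLE (hle i)).op t = sec i := by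
  subst hsup
  exact hF W sec compat

lemma existsUnique_nat (U : ℕ → Opens X) (sec : ∀ n, F.obj (op (U n)))
    (compat : ∀ i j, F.map (homOfLE (inf_le_left : U i ⊓ U j ≤ U i)).op (sec i)
      = F.map (homOfLE (inf_le_right : U i ⊓ U j ≤ U j)).op (sec j)) :
    ∃! t : F.obj (op (⨆ n, U n)), ∀ n, F.map (homOfLE (le_iSup U n)).op t = sec n :=
  hF.existsUnique_of_iSup_eq (fun k : ULift.{u} ℕ => U k.down)
    (Equiv.ulift.surjective.iSup_comp U) (fun k => le_iSup U k.down) (fun k => sec k.down)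
    (fun i j => compat i.down j.down)
    |>.imp fun _ ⟨ht, huniq⟩ => ⟨fun n => ht ⟨n⟩, fun t' ht' => huniq t' fun k => ht' k.down⟩

lemma ext_nat (U : ℕ → Opens X) {s t : F.obj (op (⨆ n, U n))}
    (h : ∀ n, F.map (homOfLE (le_iSup U n)).op s = F.map (homOfLE (le_iSup U n)).op t) :
    s = t :=
  (hF.existsUnique_nat U (fun n => F.map (homOfLE (le_iSup U n)).op t)
    (fun i j => by simp only [map_homOfLE_map_homOfLE])).unique h fun _ => rfl

lemma exists_of_monotone {U : ℕ → Opens X} (hU : Monotone U) (s : ∀ n, F.obj (op (U n)))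
    (hs : ∀ n, F.map (homOfLE (hU n.le_succ)).op (s (n + 1)) = s n) :
    ∃ t : F.obj (op (⨆ n, U n)), ∀ n, F.map (homOfLE (le_iSup U n)).op t = s n := by
  refine (hF.existsUnique_nat U s fun i j => ?_).exists
  rcases le_total i j with hij | hji
  · rw [← map_homOfLE_of_monotone hU hs hij, map_homOfLE_map_homOfLE]
  · rw [← map_homOfLE_of_monotone hU hs hji, map_homOfLE_map_homOfLE]

end HasUniqueGluing

lemma GermRel.map_homOfLE_eq (F : (Opens X)ᵒᵖ ⥤ Type v) {C : Set X}
    {a b : Σ U : NbhdIdx C, F.obj (op U.1)} (hab : GermRel F C a b) {O : Opens X}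
    (hO : (O : Set X) ⊆ C) (ha : O ≤ a.1.1) (hb : O ≤ b.1.1) :
    F.map (homOfLE ha).op a.2 = F.map (homOfLE hb).op b.2 := by
  obtain ⟨W, h₁, h₂, h⟩ := hab
  have hOW : O ≤ W.1 := hO.trans W.2
  rw [← map_homOfLE_map_homOfLE F hOW h₁, h, map_homOfLE_map_homOfLE]

namespace Germs

variable (F : (Opens X)ᵒᵖ ⥤ Type v)

def res {C : Set X} (O : Opens X) (hO : (O : Set X) ⊆ C) : Germs F C → F.obj (op O) :=
  Quot.lift (fun a => F.map (homOfLE (hO.trans a.1.2)).op a.2)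
    fun _ _ hab => hab.map_homOfLE_eq F hO _ _

lemma map_res {C C' : Set X} (hCC' : C ⊆ C') {O O' : Opens X} (hOO' : O ≤ O')
    (hO : (O : Set X) ⊆ C) (hO' : (O' : Set X) ⊆ C') (g : Germs F C') :
    F.map (homOfLE hOO').op (res F O' hO' g) = res F O hO (germRestrict F hCC' g) := by
  induction g using Quot.ind
  exact map_homOfLE_map_homOfLE F _ _ _

lemma mk_eq_germRestrict_of_map_eq_res {C C' : Set X} {O : Opens X} (hCO : C ⊆ O)
    (hOC' : (O : Set X) ⊆ C') (g : Germs F C') (a : Σ U : NbhdIdx C, F.obj (op U.1))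
    (hO : O ≤ a.1.1) (h : F.map (homOfLE hO).op a.2 = res F O hOC' g) :
    Quot.mk (GermRel F C) a = germRestrict F (hCO.trans hOC') g := by
  induction g using Quot.ind with
  | mk b => exact Quot.sound ⟨⟨O, hCO⟩, hO, hOC'.trans b.1.2, h⟩

end Germs

end

/-- **Claim 2 in the proof of Lemma 6.1** (set-theoretic form).  Let `G` be a sheaf of sets on a
topological space `X`, `V ⊆ X` open, and `(Cₙ)`, `(Uₙ)` respectively closed and open subsets with
`Cₙ ⊆ Uₙ ⊆ Cₙ₊₁` and `⋃ₙ Uₙ = V`.  Then the canonical map from `G(V)` to the inverse limit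
`lim_n G(Cₙ)` of the germinal sections along the `Cₙ` is a bijection. -/
theorem sections_bijective_inverseLimit_of_exhaustion
    {X : Type u} [TopologicalSpace X] (G : (Opens X)ᵒᵖ ⥤ Type v)
    (hsheaf : ∀ {ι : Type u} (W : ι → Opens X) (sec : ∀ i, G.obj (op (W i))),
      (∀ i j, G.map (homOfLE (inf_le_left : W i ⊓ W j ≤ W i)).op (sec i)
            = G.map (homOfLE (inf_le_right : W i ⊓ W j ≤ W j)).op (sec j)) →
      ∃! t : G.obj (op (iSup W)), ∀ i, G.map (homOfLE (le_iSup W i)).op t = sec i)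
    (V : Opens X) (Cs : ℕ → Set X) (Us : ℕ → Opens X)
    (hCU : ∀ n, Cs n ⊆ ↑(Us n)) (hUC : ∀ n, ↑(Us n) ⊆ Cs (n + 1))
    (hunion : (⋃ n, (Us n : Set X)) = ↑V) :
    Function.Bijective
      (fun s : G.obj (op V) =>
        (⟨fun n => Quot.mk (GermRel G (Cs n))
            ⟨⟨V, by
                intro x hx
                rw [← hunion]
                exact Set.mem_iUnion.mpr ⟨n, hCU n hx⟩⟩, s⟩,
          fun n => rfl⟩ :
          {gs : ∀ n, Germs G (Cs n) //
            ∀ n, germRestrict G ((hCU n).trans (hUC n)) (gs (n + 1)) = gs n})) := by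
  have hG : HasUniqueGluing G := hsheaf
  have hUs : Monotone Us := monotone_nat_of_le_succ fun n => (hUC n).trans (hCU (n + 1))
  obtain rfl : V = ⨆ n, Us n := SetLike.coe_injective (by rw [Opens.coe_iSup, hunion])
  constructor
  · intro s t hst
    exact hG.ext_nat Us fun n =>
      congrArg (Germs.res G (Us n) (hUC n)) (congrFun (congrArg Subtype.val hst) (n + 1))
  · rintro ⟨gs, hgs⟩
    obtain ⟨t, ht⟩ := hG.exists_of_monotone hUs
      (fun n => Germs.res G (Us n) (hUC n) (gs (n + 1)))
      (fun n => by rw [Germs.map_res G ((hCU (n + 1)).trans (hUC (n + 1))), hgs (n + 1)])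
    exact ⟨t, Subtype.ext <| funext fun n =>
      (Germs.mk_eq_germRestrict_of_map_eq_res G (hCU n) (hUC n) _ _ _ (ht n)).trans (hgs n)⟩
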